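/- arXiv:0904.2667 — 4 statements merged into one kernel-verified Lean document; each statement's English description precedes it below -/
import Mathlib

section
/- Let f be a slice regular function on B_R ⊂ ℍ (i.e., f(w) = Σᵢ wⁱaᵢ a convergent power series) and α ∈ B_R a non-real quaternion. Then there exist a unique slice regular function h on B_R and unique quaternions a, b such that f(w) = Δ_α(w)·h(w) + w·a + b, where Δ_α(w) = w² − w·tr(α) + |α|² is the (real) characteristic polynomial of α. -/
noncomputable section

/-- The real quaternions. -/
abbrev Quat := Quaternion ℝ

/-- Evaluation of a quaternionic power series with right coefficients `a` at `q`: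
`f(q) = Σᵢ qⁱ aᵢ` (the sum is `0` by convention if the series does not converge). -/
def pev (a : ℕ → Quat) (q : Quat) : Quat := ∑' i, q ^ i * a i

/-- The power series with coefficients `a` converges on the open ball of radius `R`. -/
def ConvOn (a : ℕ → Quat) (R : ℝ) : Prop :=
  ∀ q : Quat, ‖q‖ < R → Summable fun i => q ^ i * a i

/-- Coefficients of the star product `f * g` (convolution of coefficients). -/
def scoef (a b : ℕ → Quat) : ℕ → Quat :=
  fun k => ∑ p ∈ Finset.HasAntidiagonal.antidiagonal k, a p.1 * b p.2

/-- Coefficients of the conjugate series `conj f`. -/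
def cconj (a : ℕ → Quat) : ℕ → Quat := fun i => star (a i)

/-- Coefficients of the normal (symmetrized) series `N(f) = f * conj f`. -/
def Ncoef (a : ℕ → Quat) : ℕ → Quat := scoef a (cconj a)

/-- The conjugacy class of `α`: quaternions with the same trace and the same norm. -/
def Sset (α : Quat) : Set Quat := {x | x + star x = α + star α ∧ ‖x‖ = ‖α‖}

/-- The characteristic polynomial of `α`, evaluated at `q`:
`Δ_α(q) = q² - q·tr(α) + |α|²`. -/
def Δev (α q : Quat) : Quat := q ^ 2 - q * (α + star α) + algebraMap ℝ Quat (‖α‖ ^ 2)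

/-- Coefficients of the linear polynomial `w - α`. -/
def lin (α : Quat) : ℕ → Quat := fun k => if k = 0 then -α else if k = 1 then 1 else 0

/-- Zero set of the series `a` in the ball of radius `R`. -/
def Vset (a : ℕ → Quat) (R : ℝ) : Set Quat := {q | ‖q‖ < R ∧ pev a q = 0}

/-!
Since `Δ_α` has real coefficients, it commutes with the variable, so dividing `f` by it can be done
on coefficients. With `c` the coefficients of `1 / ((1 - αX)(1 - ᾱX))`, which satisfy
`‖cₖ‖ ≤ (k + 1)‖α‖ᵏ`, the quotient `hⱼ = ∑ᵢ cᵢ f_{i+j+2}` still converges on `B_R` (as `‖α‖ < R`),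
and the recurrence of `c` gives `f_{k+2} = h_k - tr(α) h_{k+1} + |α|² h_{k+2}`, i.e.
`f = Δ_α h + w a + b`. Conversely, `Δ_α` vanishes at `α` and at `ᾱ ≠ α`, which pins down `a` and `b`;
and `Δ_α` has no real zeros, so two quotients agree on the real diameter of `B_R`, hence coincide
by the identity theorem for real power series.
-/

open Filter Topology Finset

lemma Commute.geom_sum₂_add_two {A : Type*} [Ring A] {x y : A} (h : Commute x y) (k : ℕ) :
    ∑ i ∈ range (k + 3), x ^ i * y ^ (k + 2 - i) =
      (x + y) * ∑ i ∈ range (k + 2), x ^ i * y ^ (k + 1 - i)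
        - x * y * ∑ i ∈ range (k + 1), x ^ i * y ^ (k - i) := by
  have e1 : ∑ i ∈ range (k + 3), x ^ i * y ^ (k + 2 - i)
      = x ^ (k + 2) + y * ∑ i ∈ range (k + 2), x ^ i * y ^ (k + 1 - i) := h.geom_sum₂_succ_eq
  have e2 : ∑ i ∈ range (k + 2), x ^ i * y ^ (k + 1 - i)
      = x ^ (k + 1) + y * ∑ i ∈ range (k + 1), x ^ i * y ^ (k - i) := h.geom_sum₂_succ_eq
  rw [e1, e2, pow_succ' x (k + 1)]
  noncomm_ring

lemma summable_succ_mul_geometric {y : ℝ} (h0 : 0 ≤ y) (h1 : y < 1) :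
    Summable fun k : ℕ => ((k : ℝ) + 1) * y ^ k := by
  have hk : Summable fun k : ℕ => (k : ℝ) ^ 1 * y ^ k :=
    summable_pow_mul_geometric_of_norm_lt_one 1 (by rwa [Real.norm_eq_abs, abs_of_nonneg h0])
  refine (hk.add (summable_geometric_of_lt_one h0 h1)).congr fun k => ?_
  ring

section Recurrence

variable {A : Type*} [Ring A] [TopologicalSpace A] [IsTopologicalRing A]

/-- The hypotheses on `c` say `∑ cᵢ Xⁱ = 1 / (1 - t X + n X²)`. -/
lemma tsum_mul_shift_recombine_eq_head [T2Space A] {c g : ℕ → A} {t n : A} (hc0 : c 0 = 1)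
    (hc1 : c 1 = t) (hrec : ∀ i, c (i + 2) = t * c (i + 1) - n * c i)
    (hs : ∀ m, Summable fun i => c i * g (i + m)) :
    ∑' i, c i * g i - t * ∑' i, c i * g (i + 1) + n * ∑' i, c i * g (i + 2) = g 0 := by
  have s0 : Summable fun i => c i * g i := by simpa using hs 0
  have s1 := hs 1
  have s2 := hs 2
  have s1' : Summable fun i => c (i + 1) * g (i + 2) := by
    simpa [add_assoc] using (summable_nat_add_iff 1).mpr s1
  have e0 : ∑' i, c i * g i = g 0 + t * g 1 + ∑' i, c (i + 2) * g (i + 2) := by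
    rw [s0.tsum_eq_zero_add, ((summable_nat_add_iff 1).mpr s0).tsum_eq_zero_add]
    simp [hc0, hc1, add_assoc]
  have e1 : ∑' i, c i * g (i + 1) = g 1 + ∑' i, c (i + 1) * g (i + 2) := by
    rw [s1.tsum_eq_zero_add]
    simp [hc0, add_assoc]
  have e2 : ∑' i, c (i + 2) * g (i + 2)
      = t * ∑' i, c (i + 1) * g (i + 2) - n * ∑' i, c i * g (i + 2) := by
    rw [← s1'.tsum_mul_left, ← s2.tsum_mul_left, ← (s1'.mul_left t).tsum_sub (s2.mul_left n)]
    simp only [hrec, sub_mul, mul_assoc]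
  rw [e0, e1, e2]
  noncomm_ring

lemma hasSum_pow_mul_of_recurrence {f h : ℕ → A} {q t n H : A} (hqt : Commute q t)
    (hqn : Commute q n) (hh : HasSum (fun i => q ^ i * h i) H)
    (hf : ∀ k, f (k + 2) = h k - t * h (k + 1) + n * h (k + 2)) :
    HasSum (fun i => q ^ i * f i)
      ((q ^ 2 - q * t + n) * H + q * (f 1 + t * h 0 - n * h 1) + (f 0 - n * h 0)) := by
  have hh1 : HasSum (fun i => q ^ (i + 1) * h (i + 1)) (H - h 0) := by
    simpa using (hasSum_nat_add_iff' 1).mpr hh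
  have hh2 : HasSum (fun i => q ^ (i + 2) * h (i + 2)) (H - (h 0 + q * h 1)) := by
    simpa [sum_range_succ] using (hasSum_nat_add_iff' 2).mpr hh
  have hterm : ∀ k, q ^ (k + 2) * f (k + 2) = q ^ 2 * (q ^ k * h k)
      - t * (q * (q ^ (k + 1) * h (k + 1))) + n * (q ^ (k + 2) * h (k + 2)) := by
    intro k
    rw [← mul_assoc q, ← pow_succ', ← mul_assoc (q ^ 2), ← pow_add, add_comm 2 k, hf, mul_add,
      mul_sub, ← mul_assoc _ t, ← mul_assoc _ n, (hqt.pow_left _).eq, (hqn.pow_left _).eq]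
    noncomm_ring
  have htail : HasSum (fun k => q ^ (k + 2) * f (k + 2))
      (q ^ 2 * H - t * (q * (H - h 0)) + n * (H - (h 0 + q * h 1))) := by
    simpa only [hterm] using
      ((hh.mul_left (q ^ 2)).sub ((hh1.mul_left q).mul_left t)).add (hh2.mul_left n)
  refine (congrArg (HasSum _) ?_).mp ((hasSum_nat_add_iff (f := fun i => q ^ i * f i) 2).mp htail)
  rw [Finset.sum_range_succ, Finset.sum_range_one, pow_zero, pow_one, one_mul]
  simp only [mul_sub, mul_add, sub_mul, add_mul, ← mul_assoc, hqt.eq, hqn.eq]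
  abel

end Recurrence

lemma algebraMap_norm_sq (α : Quat) : algebraMap ℝ Quat (‖α‖ ^ 2) = α * star α := by
  rw [Quaternion.self_mul_star, Quaternion.normSq_eq_norm_mul_self, sq]
  rfl

lemma commute_self_add_star (q α : Quat) : Commute q (α + star α) := by
  rw [Quaternion.self_add_star']
  exact (Quaternion.coe_commutes _ q).symm

lemma commute_self_mul_star (q α : Quat) : Commute q (α * star α) := by
  rw [← algebraMap_norm_sq]
  exact (Algebra.commutes _ q).symm

lemma Δev_eq (α q : Quat) : Δev α q = q ^ 2 - q * (α + star α) + α * star α := by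
  rw [Δev, algebraMap_norm_sq]

lemma Δev_eq_mul_of_commute {α q : Quat} (h : Commute q α) :
    Δev α q = (q - α) * (q - star α) := by
  rw [Δev_eq, sub_mul, mul_sub, mul_sub, ← h.eq, sq]
  noncomm_ring

lemma Δev_self (α : Quat) : Δev α α = 0 := by
  rw [Δev_eq_mul_of_commute (Commute.refl α), sub_self, zero_mul]

lemma Δev_star_self (α : Quat) : Δev α (star α) = 0 := by
  rw [Δev_eq_mul_of_commute (star_comm_self' α), sub_self, mul_zero]

lemma Δev_coe_ne_zero {α : Quat} (hnr : α.im ≠ 0) (x : ℝ) : Δev α x ≠ 0 := by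
  have hx : (x : Quat) ≠ α := fun h => hnr (h ▸ Quaternion.im_coe x)
  have hx' : (x : Quat) ≠ star α := fun h => hx (by rw [← star_star α, ← h, Quaternion.star_coe])
  rw [Δev_eq_mul_of_commute (Quaternion.coe_commutes x α)]
  exact mul_ne_zero (sub_ne_zero.mpr hx) (sub_ne_zero.mpr hx')

/-- `∑ₖ invCharCoeff α k Xᵏ = 1 / ((1 - α X) (1 - ᾱ X)) = 1 / (1 - tr(α) X + |α|² X²)`. -/
def invCharCoeff (α : Quat) (k : ℕ) : Quat := ∑ i ∈ range (k + 1), α ^ i * star α ^ (k - i)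

lemma invCharCoeff_zero (α : Quat) : invCharCoeff α 0 = 1 := by simp [invCharCoeff]

lemma invCharCoeff_one (α : Quat) : invCharCoeff α 1 = α + star α := by
  simp [invCharCoeff, sum_range_succ, add_comm]

lemma invCharCoeff_add_two (α : Quat) (k : ℕ) : invCharCoeff α (k + 2) =
    (α + star α) * invCharCoeff α (k + 1) - α * star α * invCharCoeff α k :=
  Commute.geom_sum₂_add_two (star_comm_self' α).symm k

lemma norm_invCharCoeff_le (α : Quat) (k : ℕ) : ‖invCharCoeff α k‖ ≤ (k + 1) * ‖α‖ ^ k := by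
  calc ‖invCharCoeff α k‖ ≤ ∑ i ∈ range (k + 1), ‖α ^ i * star α ^ (k - i)‖ := norm_sum_le _ _
    _ = ∑ i ∈ range (k + 1), ‖α‖ ^ k := by
        refine sum_congr rfl fun i hi => ?_
        rw [norm_mul, norm_pow, norm_pow, Quaternion.norm_star, ← pow_add,
          Nat.add_sub_cancel' (Nat.lt_succ_iff.mp (mem_range.mp hi))]
    _ = (k + 1) * ‖α‖ ^ k := by simp

lemma ConvOn.exists_norm_mul_pow_le {f : ℕ → Quat} {R ρ : ℝ} (hf : ConvOn f R) (hρ0 : 0 ≤ ρ)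
    (hρ : ρ < R) : ∃ M, ∀ m, ‖f m‖ * ρ ^ m ≤ M := by
  have hs := hf ρ (by rwa [Quaternion.norm_coe, Real.norm_eq_abs, abs_of_nonneg hρ0])
  obtain ⟨M, hM⟩ := hs.tendsto_atTop_zero.norm.bddAbove_range
  refine ⟨M, fun m => (le_of_eq ?_).trans (hM (Set.mem_range_self m))⟩
  rw [norm_mul, norm_pow, Quaternion.norm_coe, Real.norm_eq_abs, abs_of_nonneg hρ0, mul_comm]

lemma convOn_of_eventually_bound {u : ℕ → Quat} {R : ℝ}
    (hu : ∀ᶠ ρ in 𝓝[<] R, ∃ M, ∀ j, ‖u j‖ * ρ ^ j ≤ M) : ConvOn u R := by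
  intro q hq
  obtain ⟨ρ, ⟨M, hM⟩, hqρ, -⟩ := (hu.and (Ioo_mem_nhdsLT hq)).exists
  have hρ : 0 < ρ := (norm_nonneg q).trans_lt hqρ
  refine Summable.of_norm_bounded
    ((summable_geometric_of_lt_one (by positivity) ((div_lt_one hρ).mpr hqρ)).mul_left M)
    fun j => ?_
  calc ‖q ^ j * u j‖ = ‖u j‖ * ρ ^ j * (‖q‖ / ρ) ^ j := by
        rw [norm_mul, norm_pow, div_pow]
        field_simp
    _ ≤ M * (‖q‖ / ρ) ^ j := by gcongr; exact hM j

section Quotient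

variable {α : Quat} {f : ℕ → Quat} {ρ M : ℝ}

lemma norm_invCharCoeff_mul_le (hρ : 0 < ρ) (hM : ∀ m, ‖f m‖ * ρ ^ m ≤ M) (i m : ℕ) :
    ‖invCharCoeff α i * f (i + m)‖ ≤ M / ρ ^ m * ((i + 1) * (‖α‖ / ρ) ^ i) := by
  have hfm : ‖f (i + m)‖ ≤ M / ρ ^ (i + m) := (le_div_iff₀ (by positivity)).mpr (hM _)
  calc ‖invCharCoeff α i * f (i + m)‖ ≤ ((i + 1) * ‖α‖ ^ i) * (M / ρ ^ (i + m)) := by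
        rw [norm_mul]
        gcongr
        exact norm_invCharCoeff_le α i
    _ = M / ρ ^ m * ((i + 1) * (‖α‖ / ρ) ^ i) := by
        rw [div_pow, pow_add]
        field_simp

lemma summable_norm_invCharCoeff_mul (hρα : ‖α‖ < ρ) (hM : ∀ m, ‖f m‖ * ρ ^ m ≤ M) (m : ℕ) :
    Summable fun i => ‖invCharCoeff α i * f (i + m)‖ := by
  have hρ : 0 < ρ := (norm_nonneg α).trans_lt hρα
  refine .of_nonneg_of_le (fun _ => norm_nonneg _) (norm_invCharCoeff_mul_le hρ hM · m)
    ((summable_succ_mul_geometric (by positivity) ((div_lt_one hρ).mpr hρα)).mul_left _)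

/-- The quotient `h` in `f = Δ_α h + w a + b`. -/
def charQuot (α : Quat) (f : ℕ → Quat) (j : ℕ) : Quat :=
  ∑' i, invCharCoeff α i * f (i + (j + 2))

lemma exists_norm_charQuot_mul_pow_le (hρα : ‖α‖ < ρ) (hM : ∀ m, ‖f m‖ * ρ ^ m ≤ M) :
    ∃ C, ∀ j, ‖charQuot α f j‖ * ρ ^ j ≤ C := by
  have hρ : 0 < ρ := (norm_nonneg α).trans_lt hρα
  set S := ∑' i : ℕ, ((i : ℝ) + 1) * (‖α‖ / ρ) ^ i
  have hS := summable_succ_mul_geometric (by positivity) ((div_lt_one hρ).mpr hρα)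
  refine ⟨M / ρ ^ 2 * S, fun j => ?_⟩
  calc ‖charQuot α f j‖ * ρ ^ j ≤ (M / ρ ^ (j + 2) * S) * ρ ^ j := by
        gcongr
        rw [← tsum_mul_left]
        exact (norm_tsum_le_tsum_norm (summable_norm_invCharCoeff_mul hρα hM _)).trans
          ((summable_norm_invCharCoeff_mul hρα hM _).tsum_le_tsum
            (norm_invCharCoeff_mul_le hρ hM · _) (hS.mul_left _))
    _ = M / ρ ^ 2 * S := by
        rw [pow_add]
        field_simp

variable {R : ℝ}

lemma convOn_charQuot (hf : ConvOn f R) (hα : ‖α‖ < R) : ConvOn (charQuot α f) R := by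
  refine convOn_of_eventually_bound ?_
  filter_upwards [Ioo_mem_nhdsLT hα] with ρ hρ
  obtain ⟨M, hM⟩ := hf.exists_norm_mul_pow_le ((norm_nonneg α).trans hρ.1.le) hρ.2
  exact exists_norm_charQuot_mul_pow_le hρ.1 hM

lemma charQuot_recurrence (hf : ConvOn f R) (hα : ‖α‖ < R) (k : ℕ) :
    f (k + 2) = charQuot α f k - (α + star α) * charQuot α f (k + 1)
      + α * star α * charQuot α f (k + 2) := by
  obtain ⟨ρ, hαρ, hρR⟩ := exists_between hα
  obtain ⟨M, hM⟩ := hf.exists_norm_mul_pow_le ((norm_nonneg α).trans hαρ.le) hρR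
  have key := tsum_mul_shift_recombine_eq_head (g := fun i => f (i + (k + 2)))
    (invCharCoeff_zero α) (invCharCoeff_one α) (invCharCoeff_add_two α)
    fun m => by simpa only [add_assoc] using
      (summable_norm_invCharCoeff_mul hαρ hM (m + (k + 2))).of_norm
  have shift : ∀ m, (fun i => invCharCoeff α i * f (i + m + (k + 2)))
      = fun i => invCharCoeff α i * f (i + (k + m + 2)) := fun m => by
    funext i
    rw [show i + m + (k + 2) = i + (k + m + 2) by omega]
  simp only [shift, zero_add] at key
  exact key.symm

lemma exists_pev_eq_Δev_mul_add (hf : ConvOn f R) (hα : ‖α‖ < R) :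
    ∃ h : ℕ → Quat, ∃ a b : Quat, ConvOn h R ∧
      ∀ q : Quat, ‖q‖ < R → pev f q = Δev α q * pev h q + q * a + b := by
  refine ⟨charQuot α f, f 1 + (α + star α) * charQuot α f 0 - α * star α * charQuot α f 1,
    f 0 - α * star α * charQuot α f 0, convOn_charQuot hf hα, fun q hq => ?_⟩
  rw [Δev_eq]
  exact (hasSum_pow_mul_of_recurrence (commute_self_add_star q α) (commute_self_mul_star q α)
    (convOn_charQuot hf hα q hq).hasSum (charQuot_recurrence hf hα)).tsum_eq

end Quotient

lemma coe_pow_mul_eq_smul (x : ℝ) (n : ℕ) (a : Quat) : (x : Quat) ^ n * a = x ^ n • a := by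
  rw [← Quaternion.coe_pow, Quaternion.coe_mul_eq_smul]

-- On the real line `pev u` is an `ℍ`-valued real power series, whose coefficients are unique.
lemma eq_zero_of_pev_coe_eq_zero {u : ℕ → Quat} {R : ℝ} (hR : 0 < R) (hu : ConvOn u R)
    (hz : ∀ x : ℝ, |x| < R → pev u x = 0) : u = 0 := by
  let p : FormalMultilinearSeries ℝ ℝ Quat := fun n => .mkPiRing ℝ (Fin n) (u n)
  have hr : 0 < R / 2 := half_pos hR
  have hrad : ENNReal.ofReal (R / 2) ≤ p.radius := by
    rw [ENNReal.ofReal, Real.toNNReal_of_nonneg hr.le]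
    refine p.le_radius_of_summable ((hu ((R / 2 : ℝ) : Quat) ?_).norm.congr fun n => ?_)
    · rw [Quaternion.norm_coe, Real.norm_eq_abs, abs_of_pos hr]
      exact half_lt_self hR
    · simp [p, norm_pow, Quaternion.norm_coe, abs_of_pos hR, mul_comm]
  have hp := (p.hasFPowerSeriesOnBall (lt_of_lt_of_le (by simpa using hr) hrad)).hasFPowerSeriesAt
  have hsum : p.sum =ᶠ[𝓝 0] 0 := by
    filter_upwards [Metric.ball_mem_nhds (0 : ℝ) hR] with x hx
    rw [Metric.mem_ball, dist_zero_right, Real.norm_eq_abs] at hx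
    rw [Pi.zero_apply, ← hz x hx, FormalMultilinearSeries.sum, pev]
    simp [p, coe_pow_mul_eq_smul]
  funext n
  simpa [p, ContinuousMultilinearMap.mkPiRing_eq_zero_iff] using
    congrFun (hp.eq_zero_of_eventually hsum) n

lemma pev_sub {u v : ℕ → Quat} {q : Quat} (hu : Summable fun i => q ^ i * u i)
    (hv : Summable fun i => q ^ i * v i) : pev (u - v) q = pev u q - pev v q := by
  simp only [pev, Pi.sub_apply, mul_sub]
  exact hu.tsum_sub hv

lemma ConvOn.sub {u v : ℕ → Quat} {R : ℝ} (hu : ConvOn u R) (hv : ConvOn v R) :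
    ConvOn (u - v) R := fun q hq => by
  simpa only [Pi.sub_apply, mul_sub] using (hu q hq).sub (hv q hq)

lemma star_ne_self_of_im_ne_zero {α : Quat} (hnr : α.im ≠ 0) : star α ≠ α := fun h =>
  hnr (by rw [Quaternion.star_eq_self.mp h, Quaternion.im_coe])

lemma eq_of_mul_add_eq_mul_add {α a₁ a₂ b₁ b₂ : Quat} (hnr : α.im ≠ 0)
    (h₁ : α * a₁ + b₁ = α * a₂ + b₂) (h₂ : star α * a₁ + b₁ = star α * a₂ + b₂) :
    a₁ = a₂ ∧ b₁ = b₂ := by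
  have e₁ : α * (a₁ - a₂) = b₂ - b₁ := by
    rw [mul_sub, sub_eq_sub_iff_add_eq_add, h₁, add_comm]
  have e₂ : star α * (a₁ - a₂) = b₂ - b₁ := by
    rw [mul_sub, sub_eq_sub_iff_add_eq_add, h₂, add_comm]
  have hmul : (α - star α) * (a₁ - a₂) = 0 := by rw [sub_mul, e₁, e₂, sub_self]
  obtain rfl : a₁ = a₂ := sub_eq_zero.mp ((mul_eq_zero.mp hmul).resolve_left
    (sub_ne_zero.mpr (star_ne_self_of_im_ne_zero hnr).symm))
  exact ⟨rfl, add_left_cancel h₁⟩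

lemma eq_of_Δev_mul_add_eq {R : ℝ} {α : Quat} (hα : ‖α‖ < R) (hnr : α.im ≠ 0)
    {h₁ h₂ : ℕ → Quat} {a₁ a₂ b₁ b₂ : Quat} (hc₁ : ConvOn h₁ R) (hc₂ : ConvOn h₂ R)
    (heq : ∀ q : Quat, ‖q‖ < R →
      Δev α q * pev h₁ q + q * a₁ + b₁ = Δev α q * pev h₂ q + q * a₂ + b₂) :
    h₁ = h₂ ∧ a₁ = a₂ ∧ b₁ = b₂ := by
  obtain ⟨rfl, rfl⟩ : a₁ = a₂ ∧ b₁ = b₂ := by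
    refine eq_of_mul_add_eq_mul_add hnr ?_ ?_
    · simpa [Δev_self] using heq α hα
    · simpa [Δev_star_self] using heq (star α) (by rwa [Quaternion.norm_star])
  refine ⟨sub_eq_zero.mp (eq_zero_of_pev_coe_eq_zero ((norm_nonneg α).trans_lt hα)
    (hc₁.sub hc₂) fun x hx => ?_), rfl, rfl⟩
  have hxR : ‖(x : Quat)‖ < R := by rwa [Quaternion.norm_coe, Real.norm_eq_abs]
  rw [pev_sub (hc₁ _ hxR) (hc₂ _ hxR)]
  refine (mul_eq_zero.mp ?_).resolve_left (Δev_coe_ne_zero hnr x)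
  rw [mul_sub, sub_eq_zero]
  exact add_right_cancel (add_right_cancel (heq _ hxR))

theorem stmt4_general (f : ℕ → Quat) (R : ℝ) (hf : ConvOn f R)
    (α : Quat) (hα : ‖α‖ < R) (hnr : α.im ≠ 0) :
    ∃! t : (ℕ → Quat) × Quat × Quat, ConvOn t.1 R ∧
      ∀ q : Quat, ‖q‖ < R →
        pev f q = Δev α q * pev t.1 q + q * t.2.1 + t.2.2 := by
  obtain ⟨h, a, b, hconv, hrep⟩ := exists_pev_eq_Δev_mul_add hf hα
  refine ⟨(h, a, b), ⟨hconv, hrep⟩, ?_⟩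
  rintro ⟨h', a', b'⟩ ⟨hconv', hrep'⟩
  obtain ⟨rfl, rfl, rfl⟩ := eq_of_Δev_mul_add_eq hα hnr hconv' hconv
    fun q hq => (hrep' q hq).symm.trans (hrep q hq)
  rfl

/-- Division with remainder by the characteristic polynomial: for `f` slice regular on
`B_R` and `α ∈ B_R` non-real, there are a unique slice regular `h` on `B_R` and unique
quaternions `a, b` with `f(w) = Δ_α(w)·h(w) + w·a + b`. -/
theorem stmt4 (f : ℕ → Quat) (R : ℝ) (hR : 0 < R) (hf : ConvOn f R)
    (α : Quat) (hα : ‖α‖ < R) (hnr : α.im ≠ 0) :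
    ∃! t : (ℕ → Quat) × Quat × Quat, ConvOn t.1 R ∧
      ∀ q : Quat, ‖q‖ < R →
        pev f q = Δev α q * pev t.1 q + q * t.2.1 + t.2.2 :=
  stmt4_general f R hf α hα hnr
end
end

section
/- For every slice regular function f on B_R ⊂ ℍ and every α ∈ B_R, exactly one of the following holds: S_α ∩ V(f) is empty, S_α ∩ V(f) is a single point, or S_α ⊆ V(f), where V(f) is the zero set of f and S_α is the conjugacy class of α. -/
noncomputable section

/-!
Every `z ∈ S_α` satisfies `z² = tr(α) z - |α|²` with real coefficients, so `zⁿ = Pₙ z + Qₙ`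
with real `Pₙ, Qₙ` not depending on `z`, and `f(z) = z b + c` on `S_α` with `b = Σ Pₙ aₙ`,
`c = Σ Qₙ aₙ`. These series converge: if `α` is not real, then `α ≠ ᾱ` both lie in `S_α`
and `(αⁿ - ᾱⁿ) aₙ = (α - ᾱ) Pₙ aₙ`. An affine map `z ↦ z b + c` vanishes at most once unless
`b = c = 0`, and for real `α` the class `S_α` is `{α}` itself.
-/

-- The coefficients of `X` and `1` in the remainder of `X ^ n` modulo `X ^ 2 - t X + s`.
def powCoeff {R : Type*} [CommRing R] (t s : R) : ℕ → R × R
  | 0 => (0, 1)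
  | n + 1 => (t * (powCoeff t s n).1 + (powCoeff t s n).2, -s * (powCoeff t s n).1)

section Quadratic

variable {R A : Type*} [CommRing R] [Ring A] [Algebra R A] {t s : R} {z : A}

theorem pow_eq_powCoeff (hz : z ^ 2 = t • z - s • 1) (n : ℕ) :
    z ^ n = (powCoeff t s n).1 • z + (powCoeff t s n).2 • 1 := by
  induction n with
  | zero => simp [powCoeff]
  | succ n ih =>
    rw [pow_succ, ih, add_mul, smul_mul_assoc, ← sq, hz, smul_mul_assoc, one_mul, powCoeff]
    module

theorem pow_mul_eq_powCoeff (hz : z ^ 2 = t • z - s • 1) (n : ℕ) (a : A) :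
    z ^ n * a = z * ((powCoeff t s n).1 • a) + (powCoeff t s n).2 • a := by
  rw [pow_eq_powCoeff hz, add_mul, smul_mul_assoc, smul_mul_assoc, one_mul, mul_smul_comm]

end Quadratic

section Summation

variable {R A : Type*} [CommRing R] [DivisionRing A] [Algebra R A] [TopologicalSpace A]
  [IsTopologicalRing A] {t s : R} {a : ℕ → A}

theorem summable_powCoeff_smul {x y : A} (hx : x ^ 2 = t • x - s • 1)
    (hy : y ^ 2 = t • y - s • 1) (hxy : x ≠ y) (hax : Summable fun n => x ^ n * a n)
    (hay : Summable fun n => y ^ n * a n) :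
    (Summable fun n => (powCoeff t s n).1 • a n) ∧
      Summable fun n => (powCoeff t s n).2 • a n := by
  have hdiff : (fun n => x ^ n * a n - y ^ n * a n) =
      fun n => (x - y) * ((powCoeff t s n).1 • a n) := by
    funext n
    rw [pow_mul_eq_powCoeff hx, pow_mul_eq_powCoeff hy, add_sub_add_right_eq_sub, sub_mul]
  have h1 : Summable fun n => (powCoeff t s n).1 • a n := by
    have := ((hdiff ▸ hax.sub hay).mul_left (x - y)⁻¹)
    simpa only [← mul_assoc, inv_mul_cancel₀ (sub_ne_zero.mpr hxy), one_mul] using this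
  refine ⟨h1, ?_⟩
  refine (hax.sub (h1.mul_left x)).congr fun n => ?_
  rw [pow_mul_eq_powCoeff hx, add_sub_cancel_left]

theorem tsum_pow_mul_eq_of_sq_eq [T2Space A] {z : A} (hz : z ^ 2 = t • z - s • 1)
    (h1 : Summable fun n => (powCoeff t s n).1 • a n)
    (h2 : Summable fun n => (powCoeff t s n).2 • a n) :
    ∑' n, z ^ n * a n =
      z * ∑' n, (powCoeff t s n).1 • a n + ∑' n, (powCoeff t s n).2 • a n := by
  simp only [pow_mul_eq_powCoeff hz, (h1.mul_left z).tsum_add h2, h1.tsum_mul_left]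

end Summation

theorem subsingleton_setOf_mul_add_eq_zero_or {A : Type*} [DivisionRing A] (b c : A) :
    {z : A | z * b + c = 0}.Subsingleton ∨ ∀ z, z * b + c = 0 := by
  by_cases hb : b = 0
  · by_cases hc : c = 0
    · exact Or.inr fun z => by simp [hb, hc]
    · exact Or.inl fun z hz => by simp [hb, hc] at hz
  · refine Or.inl fun z hz w hw => mul_right_cancel₀ hb ?_
    exact add_right_cancel (hz.trans hw.symm : z * b + c = w * b + c)

theorem self_mem_Sset (α : Quat) : α ∈ Sset α := ⟨rfl, rfl⟩

theorem star_mem_Sset (α : Quat) : star α ∈ Sset α := ⟨by rw [star_star, add_comm], norm_star α⟩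

theorem sq_eq_of_mem_Sset {α z : Quat} (hz : z ∈ Sset α) :
    z ^ 2 = (2 * α.re) • z - (‖α‖ ^ 2) • 1 := by
  have htr : z + star z = ((2 * α.re : ℝ) : Quat) := hz.1.trans (Quaternion.self_add_star' α)
  have hns : star z * z = ((‖α‖ ^ 2 : ℝ) : Quat) := by
    rw [Quaternion.star_mul_self, Quaternion.normSq_eq_norm_mul_self, hz.2, sq]
  calc z ^ 2 = (z + star z) * z - star z * z := by noncomm_ring
    _ = _ := by
      rw [htr, hns, Quaternion.coe_mul_eq_smul, ← mul_one ((‖α‖ ^ 2 : ℝ) : Quat),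
        Quaternion.coe_mul_eq_smul]

theorem Sset_subsingleton_of_star_eq_self {α : Quat} (h : star α = α) : (Sset α).Subsingleton := by
  obtain ⟨r, rfl⟩ : ∃ r : ℝ, α = r := ⟨α.re, Quaternion.star_eq_self.mp h⟩
  suffices ∀ z ∈ Sset (r : Quat), z = r • 1 from fun z hz w hw => (this z hz).trans (this w hw).symm
  intro z hz
  have hz2 := sq_eq_of_mem_Sset hz
  rw [Quaternion.re_coe, Quaternion.norm_coe, Real.norm_eq_abs, sq_abs] at hz2
  have : (z - r • 1) ^ 2 = 0 := by
    rw [sq, sub_mul, mul_sub, mul_sub, ← sq, hz2, smul_mul_assoc, mul_smul_comm, one_mul, mul_one,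
      smul_mul_assoc, one_mul]
    module
  exact sub_eq_zero.mp (pow_eq_zero_iff two_ne_zero |>.mp this)

theorem exists_pev_eq_mul_add_on_Sset {f : ℕ → Quat} {R : ℝ} (hf : ConvOn f R) {α : Quat}
    (hα : ‖α‖ < R) (hreal : star α ≠ α) : ∃ b c : Quat, ∀ z ∈ Sset α, pev f z = z * b + c := by
  have hS : ∀ z ∈ Sset α, Summable fun n => z ^ n * f n := fun z hz => hf z (hz.2.trans_lt hα)
  obtain ⟨h1, h2⟩ := summable_powCoeff_smul (sq_eq_of_mem_Sset (self_mem_Sset α))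
    (sq_eq_of_mem_Sset (star_mem_Sset α)) hreal.symm (hS _ (self_mem_Sset α))
    (hS _ (star_mem_Sset α))
  exact ⟨_, _, fun z hz => tsum_pow_mul_eq_of_sq_eq (sq_eq_of_mem_Sset hz) h1 h2⟩

theorem stmt6_general (f : ℕ → Quat) (R : ℝ) (hf : ConvOn f R)
    (α : Quat) (hα : ‖α‖ < R) :
    Sset α ∩ Vset f R = ∅ ∨ (∃ x : Quat, Sset α ∩ Vset f R = {x}) ∨
      Sset α ⊆ Vset f R := by
  suffices h : (Sset α ∩ Vset f R).Subsingleton ∨ Sset α ⊆ Vset f R by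
    rcases h with h | h
    · exact h.eq_empty_or_singleton.imp_right Or.inl
    · exact Or.inr (Or.inr h)
  by_cases hreal : star α = α
  · exact Or.inl ((Sset_subsingleton_of_star_eq_self hreal).anti Set.inter_subset_left)
  obtain ⟨b, c, hbc⟩ := exists_pev_eq_mul_add_on_Sset hf hα hreal
  rcases subsingleton_setOf_mul_add_eq_zero_or b c with h | h
  · exact Or.inl (h.anti fun z hz => (hbc z hz.1).symm.trans hz.2.2)
  · exact Or.inr fun z hz => ⟨hz.2.trans_lt hα, (hbc z hz).trans (h z)⟩

/-- For a slice regular `f` on `B_R` and `α ∈ B_R`, the intersection of the conjugacy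
class `S_α` with the zero set `V(f)` is empty, a single point, or all of `S_α`. -/
theorem stmt6 (f : ℕ → Quat) (R : ℝ) (hR : 0 < R) (hf : ConvOn f R)
    (α : Quat) (hα : ‖α‖ < R) :
    Sset α ∩ Vset f R = ∅ ∨ (∃ x : Quat, Sset α ∩ Vset f R = {x}) ∨
      Sset α ⊆ Vset f R :=
  stmt6_general f R hf α hα
end
end

section
/- If f is a slice regular function on B_R ⊂ ℍ with all coefficients real (f = conj(f) coefficientwise), then f has no isolated non-real zeros: for every non-real α ∈ B_R, if f(α) = 0 then f vanishes on the entire conjugacy sphere S_α. Consequently V(f) is a union of conjugacy classes. -/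
noncomputable section

/-!
For a non-real `x`, the real subalgebra generated by `x` is a copy of `ℂ`: the `ℝ`-algebra
embedding `ℂ → ℍ` sending `i` to `J = im x / ‖im x‖` maps `z = re x + ‖im x‖ i` to `x`.
Since the coefficients are real, the embedding commutes with the series, so `f x` is the image
of a complex power series evaluated at `z`. Two points of the same sphere `S_α` give the same
`z`, hence `f` vanishes at one of them iff it vanishes at the other.
-/

namespace Quaternion

theorem sq_norm_eq_re_sq_add_sq_norm_im (x : ℍ) : ‖x‖ ^ 2 = x.re ^ 2 + ‖x.im‖ ^ 2 := by
  simp only [sq, ← normSq_eq_norm_mul_self, normSq_def', re_im, imI_im, imJ_im, imK_im]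
  ring

theorem unitIm_mul_self {x : ℍ} (hx : x.im ≠ 0) :
    (‖x.im‖⁻¹ • x.im) * (‖x.im‖⁻¹ • x.im) = -1 := by
  have hn : ‖x.im‖ ≠ 0 := norm_ne_zero_iff.mpr hx
  have him : x.im * x.im = ((-(‖x.im‖ * ‖x.im‖) : ℝ) : ℍ) := by
    rw [← sq, im_sq, normSq_eq_norm_mul_self, coe_neg]
  rw [smul_mul_smul, him, smul_coe, show ‖x.im‖⁻¹ * ‖x.im‖⁻¹ * -(‖x.im‖ * ‖x.im‖) = -1 by
    field_simp, coe_neg, coe_one]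

/-- The point of the closed upper half-plane that corresponds to `x` on its slice. -/
def sliceCoord (x : ℍ) : ℂ := ⟨x.re, ‖x.im‖⟩

theorem norm_sliceCoord (x : ℍ) : ‖sliceCoord x‖ = ‖x‖ := by
  rw [← sq_eq_sq₀ (norm_nonneg _) (norm_nonneg _), Complex.sq_norm, Complex.normSq_apply,
    sq_norm_eq_re_sq_add_sq_norm_im]
  simp only [sliceCoord, sq]

def sliceEmbedding {x : ℍ} (hx : x.im ≠ 0) : ℂ →ₐ[ℝ] ℍ :=
  Complex.liftAux (‖x.im‖⁻¹ • x.im) (unitIm_mul_self hx)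

theorem sliceEmbedding_sliceCoord {x : ℍ} (hx : x.im ≠ 0) :
    sliceEmbedding hx (sliceCoord x) = x := by
  rw [sliceEmbedding, Complex.liftAux_apply, smul_smul]
  change (x.re : ℍ) + (‖x.im‖ * ‖x.im‖⁻¹) • x.im = x
  rw [mul_inv_cancel₀ (norm_ne_zero_iff.mpr hx), one_smul, re_add_im]

end Quaternion

open Quaternion

theorem mem_Sset_iff {x α : Quat} : x ∈ Sset α ↔ sliceCoord x = sliceCoord α := by
  have htrace : x + star x = α + star α ↔ x.re = α.re := by
    rw [self_add_star', self_add_star', coe_inj, mul_right_inj' two_ne_zero]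
  rw [Sset, Set.mem_ofPred_eq, htrace]
  constructor
  · rintro ⟨hre, hnorm⟩
    have hsq : ‖x.im‖ ^ 2 = ‖α.im‖ ^ 2 := by
      have hx := sq_norm_eq_re_sq_add_sq_norm_im x
      rw [hnorm, hre, sq_norm_eq_re_sq_add_sq_norm_im α] at hx
      linarith
    exact Complex.ext hre ((sq_eq_sq₀ (norm_nonneg _) (norm_nonneg _)).mp hsq)
  · intro h
    exact ⟨congrArg Complex.re h, by rw [← norm_sliceCoord x, h, norm_sliceCoord]⟩

theorem mem_Sset_self (x : Quat) : x ∈ Sset x := mem_Sset_iff.mpr rfl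

theorem eq_of_mem_Sset_of_im_eq_zero {x α : Quat} (hx : x ∈ Sset α) (hα : α.im = 0) : x = α := by
  have h := mem_Sset_iff.mp hx
  have hre : x.re = α.re := congrArg Complex.re h
  have him : ‖x.im‖ = ‖α.im‖ := congrArg Complex.im h
  rw [hα, norm_zero, norm_eq_zero] at him
  rw [← re_add_im x, ← re_add_im α, hre, him, hα]

theorem im_ne_zero_of_mem_Sset {x α : Quat} (hx : x ∈ Sset α) (hα : α.im ≠ 0) : x.im ≠ 0 := by
  have him : ‖x.im‖ = ‖α.im‖ := congrArg Complex.im (mem_Sset_iff.mp hx)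
  rw [← norm_ne_zero_iff, him]
  exact norm_ne_zero_iff.mpr hα

section RealCoefficients

variable (r : ℕ → ℝ)

theorem summable_sliceCoord_of_summable (x : Quat) (hs : Summable fun i => x ^ i * (r i : Quat)) :
    Summable fun i => sliceCoord x ^ i * (r i : ℂ) := by
  refine Summable.of_norm (hs.norm.congr fun i => ?_)
  rw [norm_mul, norm_mul, norm_pow, norm_pow, norm_sliceCoord, norm_coe, Complex.norm_real]

theorem pev_ofReal_eq_sliceEmbedding {x : Quat} (hx : x.im ≠ 0)
    (hs : Summable fun i => x ^ i * (r i : Quat)) :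
    pev (fun i => (r i : Quat)) x = sliceEmbedding hx (∑' i, sliceCoord x ^ i * (r i : ℂ)) := by
  have hmap := (summable_sliceCoord_of_summable r x hs).hasSum.map (sliceEmbedding hx)
    (sliceEmbedding hx).toLinearMap.continuous_of_finiteDimensional
  refine (hmap.tsum_eq.symm.trans (tsum_congr fun i => ?_)).symm
  rw [Function.comp_apply, map_mul, map_pow, sliceEmbedding_sliceCoord, ← Complex.coe_algebraMap,
    AlgHom.commutes]
  rfl

theorem pev_ofReal_eq_zero_of_mem_Sset {x α : Quat} (hxα : x ∈ Sset α)
    (hsα : Summable fun i => α ^ i * (r i : Quat)) (hsx : Summable fun i => x ^ i * (r i : Quat))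
    (h0 : pev (fun i => (r i : Quat)) α = 0) : pev (fun i => (r i : Quat)) x = 0 := by
  by_cases hα : α.im = 0
  · rwa [eq_of_mem_Sset_of_im_eq_zero hxα hα]
  have hx := im_ne_zero_of_mem_Sset hxα hα
  have hinj : Function.Injective (sliceEmbedding hα) := (sliceEmbedding hα : ℂ →+* ℍ).injective
  rw [pev_ofReal_eq_sliceEmbedding r hα hsα, map_eq_zero_iff _ hinj] at h0
  rw [pev_ofReal_eq_sliceEmbedding r hx hsx, mem_Sset_iff.mp hxα, h0, map_zero]

theorem Sset_subset_Vset_ofReal {R : ℝ} (hconv : ConvOn (fun i => (r i : Quat)) R) {α : Quat}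
    (hα : α ∈ Vset (fun i => (r i : Quat)) R) : Sset α ⊆ Vset (fun i => (r i : Quat)) R := by
  intro x hxα
  have hxR : ‖x‖ < R := hxα.2 ▸ hα.1
  exact ⟨hxR, pev_ofReal_eq_zero_of_mem_Sset r hxα (hconv α hα.1) (hconv x hxR) hα.2⟩

end RealCoefficients

theorem stmt7_general (f : ℕ → Quat) (R : ℝ) (hf : ConvOn f R)
    (hreal : ∀ i, (f i).im = 0) :
    (∀ α : Quat, ‖α‖ < R → α.im ≠ 0 → pev f α = 0 →
      ∀ x ∈ Sset α, pev f x = 0) ∧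
    Vset f R = ⋃ α ∈ Vset f R, Sset α := by
  obtain ⟨r, rfl⟩ : ∃ r : ℕ → ℝ, f = fun i => (r i : Quat) :=
    ⟨fun i => (f i).re, funext fun i => (re_add_im (f i)).symm.trans (by rw [hreal i, add_zero])⟩
  have hSset := fun α => Sset_subset_Vset_ofReal r hf (α := α)
  refine ⟨fun α hαR _ h0 x hxα => (hSset α ⟨hαR, h0⟩ hxα).2, ?_⟩
  exact (Set.iUnion₂_subset hSset).antisymm' fun q hq => Set.mem_biUnion hq (mem_Sset_self q)

/-- A slice regular function with real coefficients has no isolated non-real zeros: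
every non-real zero is spherical, and hence the zero set is a union of conjugacy
classes. -/
theorem stmt7 (f : ℕ → Quat) (R : ℝ) (hR : 0 < R) (hf : ConvOn f R)
    (hreal : ∀ i, (f i).im = 0) :
    (∀ α : Quat, ‖α‖ < R → α.im ≠ 0 → pev f α = 0 →
      ∀ x ∈ Sset α, pev f x = 0) ∧
    Vset f R = ⋃ α ∈ Vset f R, Sset α :=
  stmt7_general f R hf hreal
end
end

section
/- (Real zeros of star products add multiplicities) Let f, g be slice regular on B_R ⊂ ℍ and α ∈ B_R ∩ ℝ. If (w − α)^s divides f with f = (w−α)^s h₁, h₁(α) ≠ 0, and (w − α)^t divides g with g = (w−α)^t h₂, h₂(α) ≠ 0, then f*g = (w−α)^{s+t}(h₁ * h₂) with (h₁ * h₂)(α) ≠ 0. -/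
noncomputable section

/-!
A polynomial `p` with real coefficients is central for the star product, and evaluating a
star product whose left factor is `p` gives `p(q) · h(q)`. On the real axis, where a
series is an ordinary real-analytic function, the hypothesis `f(x) = (x - α)^s h₁(x)` thus
says that `f` and `(w - α)^s * h₁` have the same sum near `0`, hence the same coefficients.
Centrality then gives `f * g = (w - α)^s * h₁ * (w - α)^t * h₂ = (w - α)^(s+t) * (h₁ * h₂)`,
and at the real point `α` every coefficient commutes with the powers of `α`, so
`(h₁ * h₂)(α) = h₁(α) h₂(α) ≠ 0`.
-/

open Finset Polynomial Topology

lemma norm_algebraMap_real (x : ℝ) : ‖algebraMap ℝ Quat x‖ = |x| := by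
  rw [norm_algebraMap', Real.norm_eq_abs]

def pevSeries (a : ℕ → Quat) : FormalMultilinearSeries ℝ ℝ Quat :=
  fun n => ContinuousMultilinearMap.mkPiRing ℝ (Fin n) (a n)

lemma norm_pevSeries (a : ℕ → Quat) (n : ℕ) : ‖pevSeries a n‖ = ‖a n‖ :=
  ContinuousMultilinearMap.norm_mkPiRing _

lemma ConvOn.le_radius {a : ℕ → Quat} {R : ℝ} (ha : ConvOn a R) :
    ENNReal.ofReal R ≤ (pevSeries a).radius := by
  refine ENNReal.le_of_forall_nnreal_lt fun r hr => (pevSeries a).le_radius_of_tendsto (l := 0) ?_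
  have hrR : |(r : ℝ)| < R := by
    rw [NNReal.abs_eq]; exact (ENNReal.coe_lt_ofReal).1 hr
  have := (ha _ ((norm_algebraMap_real r).trans_lt hrR)).tendsto_atTop_zero.norm
  simp only [norm_mul, norm_pow, norm_algebraMap_real, NNReal.abs_eq, norm_zero] at this
  simpa only [norm_pevSeries, mul_comm] using this

lemma ConvOn.summable_norm {a : ℕ → Quat} {R : ℝ} (ha : ConvOn a R) {q : Quat} (hq : ‖q‖ < R) :
    Summable fun i => ‖q ^ i * a i‖ := by
  have hqR : (‖q‖₊ : ENNReal) < (pevSeries a).radius :=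
    (ENNReal.coe_lt_ofReal.2 hq).trans_le ha.le_radius
  simpa only [norm_pevSeries, coe_nnnorm, norm_mul, norm_pow, mul_comm] using
    (pevSeries a).summable_norm_mul_pow hqR

lemma ConvOn.hasFPowerSeriesOnBall {a : ℕ → Quat} {R : ℝ} (ha : ConvOn a R) (hR : 0 < R) :
    HasFPowerSeriesOnBall (fun x : ℝ => pev a (algebraMap ℝ Quat x)) (pevSeries a) 0
      (ENNReal.ofReal R) where
  r_le := ha.le_radius
  r_pos := ENNReal.ofReal_pos.2 hR
  hasSum {y} hy := by
    have hyR : ‖algebraMap ℝ Quat y‖ < R := by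
      rw [norm_algebraMap_real]
      simpa [edist_dist, Real.dist_eq, ENNReal.ofReal_lt_ofReal_iff hR] using hy
    refine (zero_add y).symm ▸ (ha _ hyR).hasSum.congr_fun fun n => ?_
    simp [pevSeries, Algebra.smul_def]


lemma eq_of_pev_algebraMap_eq {a b : ℕ → Quat} {R : ℝ} (hR : 0 < R)
    (ha : ConvOn a R) (hb : ConvOn b R)
    (h : ∀ x : ℝ, |x| < R → pev a (algebraMap ℝ Quat x) = pev b (algebraMap ℝ Quat x)) :
    a = b := by
  have hev : ∀ᶠ x in 𝓝 (0 : ℝ),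
      pev a (algebraMap ℝ Quat x) = pev b (algebraMap ℝ Quat x) := by
    filter_upwards [eventually_abs_sub_lt (0 : ℝ) hR] with x hx
    exact h x (by simpa using hx)
  have hser : pevSeries a = pevSeries b :=
    (ha.hasFPowerSeriesOnBall hR).hasFPowerSeriesAt.eq_formalMultilinearSeries_of_eventually
      (hb.hasFPowerSeriesOnBall hR).hasFPowerSeriesAt hev
  funext n
  simpa [pevSeries] using congr($hser n fun _ => (1 : ℝ))

lemma summable_norm_scoef {a b : ℕ → Quat} {q : Quat}
    (ha : Summable fun i => ‖q ^ i * a i‖) (hb : Summable fun i => ‖q ^ i * b i‖) :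
    Summable fun k => ‖q ^ k * scoef a b k‖ := by
  have hprod := summable_sum_mul_antidiagonal_of_summable_mul
    (Summable.mul_of_nonneg ha hb (fun _ => norm_nonneg _) fun _ => norm_nonneg _)
  refine hprod.of_nonneg_of_le (fun _ => norm_nonneg _) fun k => ?_
  calc ‖q ^ k * scoef a b k‖ ≤ ∑ p ∈ antidiagonal k, ‖q ^ k * (a p.1 * b p.2)‖ := by
        rw [scoef, mul_sum]; exact norm_sum_le _ _
    _ = ∑ p ∈ antidiagonal k, ‖q ^ p.1 * a p.1‖ * ‖q ^ p.2 * b p.2‖ := by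
        refine sum_congr rfl fun p hp => ?_
        rw [← mem_antidiagonal.mp hp]
        simp only [norm_mul, norm_pow, pow_add]
        ring

lemma ConvOn.scoef {a b : ℕ → Quat} {R : ℝ} (ha : ConvOn a R) (hb : ConvOn b R) :
    ConvOn (scoef a b) R := fun _ hq =>
  (summable_norm_scoef (ha.summable_norm hq) (hb.summable_norm hq)).of_norm

lemma pev_scoef_of_commute {a b : ℕ → Quat} {q : Quat}
    (ha : Summable fun i => ‖q ^ i * a i‖) (hb : Summable fun i => ‖q ^ i * b i‖)
    (hc : ∀ i j, Commute (a i) (q ^ j)) :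
    pev (scoef a b) q = pev a q * pev b q := by
  rw [pev, pev, pev, tsum_mul_tsum_eq_tsum_sum_antidiagonal_of_summable_norm ha hb]
  refine tsum_congr fun k => ?_
  rw [scoef, mul_sum]
  refine (sum_congr rfl fun p hp => ?_).symm
  rw [← mem_antidiagonal.mp hp, pow_add, mul_assoc, ← mul_assoc (a p.1), (hc p.1 p.2).eq,
    mul_assoc, mul_assoc]

lemma mk_scoef (a b : ℕ → Quat) :
    PowerSeries.mk (scoef a b) = PowerSeries.mk a * PowerSeries.mk b := by
  ext k : 1
  simp [scoef, PowerSeries.coeff_mul]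

lemma PowerSeries.mk_injective {R : Type*} [Semiring R] :
    Function.Injective (PowerSeries.mk : (ℕ → R) → PowerSeries R) := fun a b h => by
  funext k
  simpa using congr(PowerSeries.coeff k $h)

def realCoef (p : ℝ[X]) : ℕ → Quat := fun i => algebraMap ℝ Quat (p.coeff i)

lemma realCoef_commute (p : ℝ[X]) (i : ℕ) (x : Quat) : Commute (realCoef p i) x :=
  Algebra.commute_algebraMap_left _ x

lemma summable_norm_realCoef (p : ℝ[X]) (q : Quat) :
    Summable fun i => ‖q ^ i * realCoef p i‖ :=
  summable_of_ne_finset_zero (s := p.support) fun i hi => by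
    simp [realCoef, notMem_support_iff.1 hi]

lemma pev_realCoef (p : ℝ[X]) (q : Quat) : pev (realCoef p) q = aeval q p := by
  rw [pev, aeval_eq_sum_range, tsum_eq_sum (s := range (p.natDegree + 1))]
  · exact sum_congr rfl fun i _ => by
      rw [Algebra.smul_def]; exact (realCoef_commute p i _).eq.symm
  · intro i hi
    simp [realCoef, coeff_eq_zero_of_natDegree_lt (by simpa [Nat.lt_succ_iff] using hi)]

lemma pev_scoef_realCoef (p : ℝ[X]) {b : ℕ → Quat} {q : Quat}
    (hb : Summable fun i => ‖q ^ i * b i‖) :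
    pev (scoef (realCoef p) b) q = aeval q p * pev b q := by
  rw [pev_scoef_of_commute (summable_norm_realCoef p q) hb fun i _ => realCoef_commute p i _,
    pev_realCoef]

lemma scoef_realCoef_comm (p : ℝ[X]) (a : ℕ → Quat) :
    scoef a (realCoef p) = scoef (realCoef p) a := by
  funext k
  rw [scoef, scoef, ← Nat.sum_antidiagonal_swap]
  exact sum_congr rfl fun i _ => (realCoef_commute p i.1 (a i.2)).eq.symm

lemma scoef_realCoef_realCoef (p r : ℝ[X]) :
    scoef (realCoef p) (realCoef r) = realCoef (p * r) := by
  funext k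
  simp [scoef, realCoef, coeff_mul]

lemma scoef_scoef_realCoef (p r : ℝ[X]) (a b : ℕ → Quat) :
    scoef (scoef (realCoef p) a) (scoef (realCoef r) b) = scoef (realCoef (p * r)) (scoef a b) := by
  apply PowerSeries.mk_injective
  have hc : Commute (PowerSeries.mk a) (PowerSeries.mk (realCoef r)) := by
    rw [Commute, SemiconjBy, ← mk_scoef, ← mk_scoef, scoef_realCoef_comm]
  rw [← scoef_realCoef_realCoef]
  simp only [mk_scoef]
  rw [mul_assoc, hc.left_comm, ← mul_assoc]

lemma eq_scoef_realCoef_of_pev_eq {a b : ℕ → Quat} {R : ℝ} (hR : 0 < R)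
    (ha : ConvOn a R) (hb : ConvOn b R) (p : ℝ[X])
    (h : ∀ q : Quat, ‖q‖ < R → pev a q = aeval q p * pev b q) :
    a = scoef (realCoef p) b := by
  have hp : ConvOn (realCoef p) R := fun q _ => (summable_norm_realCoef p q).of_norm
  refine eq_of_pev_algebraMap_eq hR ha (hp.scoef hb) fun x hx => ?_
  have hxR : ‖algebraMap ℝ Quat x‖ < R := (norm_algebraMap_real x).trans_lt hx
  rw [h _ hxR, pev_scoef_realCoef p (hb.summable_norm hxR)]

/-- Real zeros of star products add multiplicities: if `f = (w-α)^s h₁` and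
`g = (w-α)^t h₂` with `α` real, `h₁(α) ≠ 0`, `h₂(α) ≠ 0`, then
`f*g = (w-α)^(s+t) (h₁*h₂)` with `(h₁*h₂)(α) ≠ 0`. -/
theorem stmt16 (f g h₁ h₂ : ℕ → Quat) (R : ℝ) (hR : 0 < R) (s t : ℕ)
    (hf : ConvOn f R) (hg : ConvOn g R) (hh₁ : ConvOn h₁ R) (hh₂ : ConvOn h₂ R)
    (α : ℝ) (hα : |α| < R)
    (hdf : ∀ q : Quat, ‖q‖ < R →
      pev f q = (q - algebraMap ℝ Quat α) ^ s * pev h₁ q)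
    (hdg : ∀ q : Quat, ‖q‖ < R →
      pev g q = (q - algebraMap ℝ Quat α) ^ t * pev h₂ q)
    (h1 : pev h₁ (algebraMap ℝ Quat α) ≠ 0) (h2 : pev h₂ (algebraMap ℝ Quat α) ≠ 0) :
    (∀ q : Quat, ‖q‖ < R →
      pev (scoef f g) q = (q - algebraMap ℝ Quat α) ^ (s + t) * pev (scoef h₁ h₂) q) ∧
    pev (scoef h₁ h₂) (algebraMap ℝ Quat α) ≠ 0 := by
  have hf' : f = scoef (realCoef ((X - C α) ^ s)) h₁ :=
    eq_scoef_realCoef_of_pev_eq hR hf hh₁ _ fun q hq => by simpa using hdf q hq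
  have hg' : g = scoef (realCoef ((X - C α) ^ t)) h₂ :=
    eq_scoef_realCoef_of_pev_eq hR hg hh₂ _ fun q hq => by simpa using hdg q hq
  have hfg : scoef f g = scoef (realCoef ((X - C α) ^ (s + t))) (scoef h₁ h₂) := by
    rw [hf', hg', scoef_scoef_realCoef, pow_add]
  refine ⟨fun q hq => ?_, ?_⟩
  · rw [hfg, pev_scoef_realCoef _ ((hh₁.scoef hh₂).summable_norm hq)]
    simp
  · have hαR : ‖algebraMap ℝ Quat α‖ < R := (norm_algebraMap_real α).trans_lt hα
    rw [pev_scoef_of_commute (hh₁.summable_norm hαR) (hh₂.summable_norm hαR)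
      fun i j => (Algebra.commute_algebraMap_right α (h₁ i)).pow_right j]
    exact mul_ne_zero h1 h2
end
end
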